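/- Let v be a locally semiconcave function on an open set of ℝⁿ and let x : [a,b] → ℝⁿ be a Lipschitz arc with image contained in that open set. If 0 ∈ D⁺v(x(s)) for every s ∈ [a,b], then the composite function s ↦ v(x(s)) is constant on [a,b]. Consequently, if v(x([a,b])) contains a nontrivial closed interval, then there exists s₀ ∈ [a,b] with 0 ∉ D⁺v(x(s₀)). -/

import Mathlib

open RealInnerProductSpace
open Set

/-- The (Dini) superdifferential of `v` at `x`, relative to `U`. -/
def superdiffOn {n : ℕ} (v : EuclideanSpace ℝ (Fin n) → ℝ) (U : Set (EuclideanSpace ℝ (Fin n)))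
    (x : EuclideanSpace ℝ (Fin n)) : Set (EuclideanSpace ℝ (Fin n)) :=
  {p | ∀ ε > 0, ∃ δ > 0, ∀ y ∈ U, ‖y - x‖ < δ → v y - v x - ⟪p, y - x⟫ ≤ ε * ‖y - x‖}

/-- `v` is locally semiconcave (with linear modulus) on the open set `U`. -/
def LocallySemiconcaveOn {n : ℕ} (v : EuclideanSpace ℝ (Fin n) → ℝ)
    (U : Set (EuclideanSpace ℝ (Fin n))) : Prop :=
  ∀ z ∈ U, ∃ C : ℝ, ∃ δ > 0, Metric.ball z δ ⊆ U ∧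
    ∀ w ∈ Metric.ball z δ, ∀ q ∈ superdiffOn v U w, ∀ y ∈ Metric.ball z δ,
      v y ≤ v w + ⟪q, y - w⟫ + C / 2 * ‖y - w‖ ^ 2

/-!
At two nearby points where `0 ∈ D⁺v`, semiconcavity applied in both directions gives
`|v y - v w| ≤ C/2 ‖y - w‖²`. Along a Lipschitz arc `γ` this makes `v ∘ γ` vary by
`O(|s - t|²)`, so it has zero derivative on `[a, b]` and is constant; a constant function
cannot attain both endpoints of a nontrivial interval.
-/

open Topology Filter Asymptotics

theorem hasDerivWithinAt_zero_of_isBigO_sq {𝕜 F : Type*} [NontriviallyNormedField 𝕜]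
    [NormedAddCommGroup F] [NormedSpace 𝕜 F] {f : 𝕜 → F} {s : Set 𝕜} {t : 𝕜}
    (h : (fun y => f y - f t) =O[𝓝[s] t] fun y => ‖y - t‖ ^ 2) :
    HasDerivWithinAt f 0 s t := by
  refine .of_isLittleO ?_
  simpa only [smul_zero, sub_zero] using
    h.trans_isLittleO ((isLittleO_pow_sub_sub t one_lt_two).mono nhdsWithin_le_nhds)

section

variable {n : ℕ} {U : Set (EuclideanSpace ℝ (Fin n))} {v : EuclideanSpace ℝ (Fin n) → ℝ}

theorem LocallySemiconcaveOn.exists_abs_sub_le_of_zero_mem_superdiffOn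
    (hv : LocallySemiconcaveOn v U) {z : EuclideanSpace ℝ (Fin n)} (hz : z ∈ U) :
    ∃ C : ℝ, ∃ δ > 0, ∀ y ∈ Metric.ball z δ, ∀ w ∈ Metric.ball z δ,
      0 ∈ superdiffOn v U y → 0 ∈ superdiffOn v U w → |v y - v w| ≤ C / 2 * ‖y - w‖ ^ 2 := by
  obtain ⟨C, δ, hδ, -, hsc⟩ := hv z hz
  refine ⟨C, δ, hδ, fun y hy w hw hy0 hw0 => abs_sub_le_iff.2 ⟨?_, ?_⟩⟩
  · have := hsc w hw 0 hw0 y hy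
    rw [inner_zero_left, add_zero] at this
    linarith
  · have := hsc y hy 0 hy0 w hw
    rw [inner_zero_left, add_zero, norm_sub_rev] at this
    linarith

theorem LocallySemiconcaveOn.hasDerivWithinAt_comp_of_zero_mem_superdiffOn
    (hv : LocallySemiconcaveOn v U) {γ : ℝ → EuclideanSpace ℝ (Fin n)} {L : NNReal}
    {s : Set ℝ} (hLip : LipschitzOnWith L γ s) (h0 : ∀ t ∈ s, 0 ∈ superdiffOn v U (γ t))
    {t : ℝ} (ht : t ∈ s) (hγt : γ t ∈ U) :
    HasDerivWithinAt (fun y => v (γ y)) 0 s t := by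
  obtain ⟨C, δ, hδ, hflat⟩ := hv.exists_abs_sub_le_of_zero_mem_superdiffOn hγt
  have hnear : ∀ᶠ y in 𝓝[s] t, y ∈ s ∧ γ y ∈ Metric.ball (γ t) δ :=
    eventually_mem_nhdsWithin.and <|
      (hLip.continuousOn t ht).eventually (Metric.ball_mem_nhds _ hδ)
  have hv_sq : (fun y => v (γ y) - v (γ t)) =O[𝓝[s] t] fun y => ‖γ y - γ t‖ ^ 2 :=
    IsBigO.of_bound (C / 2) <| hnear.mono fun y ⟨hy, hyδ⟩ => by
      simpa using hflat _ hyδ _ (Metric.mem_ball_self hδ) (h0 y hy) (h0 t ht)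
  have hγ : (fun y => γ y - γ t) =O[𝓝[s] t] fun y => y - t :=
    IsBigO.of_bound L <| eventually_mem_nhdsWithin.mono fun y hy => by
      simpa only [← dist_eq_norm] using hLip.dist_le_mul y hy t ht
  exact hasDerivWithinAt_zero_of_isBigO_sq <| hv_sq.trans <| by
    simpa only [norm_pow, norm_norm] using (hγ.norm_left.norm_right.pow 2)

theorem LocallySemiconcaveOn.eq_of_zero_mem_superdiffOn
    (hv : LocallySemiconcaveOn v U) {a b : ℝ} {γ : ℝ → EuclideanSpace ℝ (Fin n)} {L : NNReal}
    (hLip : LipschitzOnWith L γ (Icc a b)) (hmaps : ∀ s ∈ Icc a b, γ s ∈ U)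
    (h0 : ∀ s ∈ Icc a b, 0 ∈ superdiffOn v U (γ s)) :
    ∀ s ∈ Icc a b, v (γ s) = v (γ a) := by
  have hderiv : ∀ t ∈ Icc a b, HasDerivWithinAt (fun s => v (γ s)) 0 (Icc a b) t :=
    fun _ ht => hv.hasDerivWithinAt_comp_of_zero_mem_superdiffOn hLip h0 ht (hmaps _ ht)
  exact constant_of_has_deriv_right_zero (fun t ht => (hderiv t ht).continuousWithinAt)
    fun t ht => (hderiv t (Ico_subset_Icc_self ht)).mono_of_mem_nhdsWithin
      (Icc_mem_nhdsGE_of_mem ht)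

end

theorem const_along_arc_and_regular_point_general {n : ℕ}
    (U : Set (EuclideanSpace ℝ (Fin n)))
    (v : EuclideanSpace ℝ (Fin n) → ℝ) (hv : LocallySemiconcaveOn v U)
    (a b : ℝ) (γ : ℝ → EuclideanSpace ℝ (Fin n)) (L : NNReal)
    (hLip : LipschitzOnWith L γ (Icc a b)) (hmaps : ∀ s ∈ Icc a b, γ s ∈ U) :
    ((∀ s ∈ Icc a b, (0 : EuclideanSpace ℝ (Fin n)) ∈ superdiffOn v U (γ s)) →
      ∀ s ∈ Icc a b, v (γ s) = v (γ a)) ∧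
    (∀ c d : ℝ, c < d → Icc c d ⊆ v '' (γ '' Icc a b) →
      ∃ s₀ ∈ Icc a b, (0 : EuclideanSpace ℝ (Fin n)) ∉ superdiffOn v U (γ s₀)) := by
  have hconst := hv.eq_of_zero_mem_superdiffOn hLip hmaps
  refine ⟨hconst, fun c d hcd hsub => ?_⟩
  by_contra! h0
  obtain ⟨_, ⟨sc, hsc, rfl⟩, hvc⟩ := hsub (left_mem_Icc.2 hcd.le)
  obtain ⟨_, ⟨sd, hsd, rfl⟩, hvd⟩ := hsub (right_mem_Icc.2 hcd.le)
  have hc := hconst h0 sc hsc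
  have hd := hconst h0 sd hsd
  linarith

/-- Along a Lipschitz arc on which `0 ∈ D⁺v` everywhere, a locally semiconcave `v` is
constant; consequently, if `v(x([a,b]))` contains a nontrivial closed interval, then
`0 ∉ D⁺v(x(s₀))` for some `s₀`. -/
theorem const_along_arc_and_regular_point {n : ℕ}
    (U : Set (EuclideanSpace ℝ (Fin n))) (hUo : IsOpen U)
    (v : EuclideanSpace ℝ (Fin n) → ℝ) (hv : LocallySemiconcaveOn v U)
    (a b : ℝ) (hab : a < b) (γ : ℝ → EuclideanSpace ℝ (Fin n)) (L : NNReal)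
    (hLip : LipschitzOnWith L γ (Icc a b)) (hmaps : ∀ s ∈ Icc a b, γ s ∈ U) :
    ((∀ s ∈ Icc a b, (0 : EuclideanSpace ℝ (Fin n)) ∈ superdiffOn v U (γ s)) →
      ∀ s ∈ Icc a b, v (γ s) = v (γ a)) ∧
    (∀ c d : ℝ, c < d → Icc c d ⊆ v '' (γ '' Icc a b) →
      ∃ s₀ ∈ Icc a b, (0 : EuclideanSpace ℝ (Fin n)) ∉ superdiffOn v U (γ s₀)) :=
  const_along_arc_and_regular_point_general U v hv a b γ L hLip hmaps
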